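/- arXiv:math/0601340 — 2 statements merged into one kernel-verified Lean document; each statement's English description precedes it below -/
import Mathlib

section
/- Efimov-type bound for subadditive moduli: if ω : [0,1] → [0,∞) is nondecreasing, subadditive (ω(τ₁+τ₂) ≤ ω(τ₁)+ω(τ₂) whenever all arguments lie in [0,1]), and ω(0) = 0, then there exists a concave nondecreasing function μ : [0,1] → ℝ with μ(τ) ≤ ω(τ) ≤ 2μ(τ) for all τ ∈ [0,1]. -/
open Set

theorem stmt_4 (ω : ℝ → ℝ) (hmono : MonotoneOn ω (Icc (0:ℝ) 1))
    (hnonneg : ∀ τ ∈ Icc (0:ℝ) 1, 0 ≤ ω τ)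
    (hsub : ∀ τ₁ τ₂ : ℝ, τ₁ ∈ Icc (0:ℝ) 1 → τ₂ ∈ Icc (0:ℝ) 1 → τ₁ + τ₂ ∈ Icc (0:ℝ) 1 →
      ω (τ₁ + τ₂) ≤ ω τ₁ + ω τ₂)
    (h0 : ω 0 = 0) :
    ∃ μ : ℝ → ℝ, ConcaveOn ℝ (Icc (0:ℝ) 1) μ ∧ MonotoneOn μ (Icc (0:ℝ) 1) ∧
      ∀ τ ∈ Icc (0:ℝ) 1, μ τ ≤ ω τ ∧ ω τ ≤ 2 * μ τ := by
  classical
  -- set of affine majorants (intercept, slope)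
  set A : Set (ℝ × ℝ) := {p | ∀ s ∈ Icc (0:ℝ) 1, ω s ≤ p.1 + p.2 * s} with hA
  have hAne : (ω 1, (0:ℝ)) ∈ A := by
    intro s hs
    simpa using hmono hs (by norm_num) hs.2
  -- the hull
  set ν : ℝ → ℝ := fun t => sInf ((fun p : ℝ × ℝ => p.1 + p.2 * t) '' A) with hν
  have himne : ∀ t : ℝ, ((fun p : ℝ × ℝ => p.1 + p.2 * t) '' A).Nonempty :=
    fun t => ⟨_, ⟨_, hAne, rfl⟩⟩
  have hbdd : ∀ t ∈ Icc (0:ℝ) 1, ω t ∈ lowerBounds ((fun p : ℝ × ℝ => p.1 + p.2 * t) '' A) := by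
    rintro t ht _ ⟨p, hp, rfl⟩
    exact hp t ht
  -- ω ≤ ν on [0,1]
  have hων : ∀ t ∈ Icc (0:ℝ) 1, ω t ≤ ν t := fun t ht => le_csInf (himne t) (hbdd t ht)
  have hle : ∀ t ∈ Icc (0:ℝ) 1, ∀ p ∈ A, ν t ≤ p.1 + p.2 * t := by
    intro t ht p hp
    exact csInf_le ⟨ω t, hbdd t ht⟩ ⟨p, hp, rfl⟩
  -- key subadditive growth lemma
  have hgrow : ∀ t ∈ Icc (0:ℝ) 1, 0 < t → ∀ n : ℕ, ∀ s ∈ Icc (0:ℝ) 1,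
      s ≤ (n + 1) * t → ω s ≤ (n + 1) * ω t := by
    intro t ht ht0
    intro n
    induction n with
    | zero =>
      intro s hs hsle
      simpa using hmono hs ht (by simpa using hsle)
    | succ n ih =>
      intro s hs hsle
      by_cases hst : s ≤ t
      · calc ω s ≤ ω t := hmono hs ht hst
          _ ≤ (↑(n + 1) + 1) * ω t := by
              have := hnonneg t ht
              nlinarith
      · push_neg at hst
        have hst' : s - t ∈ Icc (0:ℝ) 1 := ⟨by linarith, by linarith [hs.2, ht0]⟩
        have h1 : ω s ≤ ω (s - t) + ω t := by
          have := hsub (s - t) t hst' ht (by simpa using hs)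
          simpa using this
        have h2 : ω (s - t) ≤ (n + 1) * ω t := by
          apply ih (s - t) hst'
          push_cast at hsle ⊢
          linarith
        push_cast
        push_cast at h2
        linarith
  -- ν ≤ 2ω on (0,1]
  have hν2ω : ∀ t ∈ Icc (0:ℝ) 1, 0 < t → ν t ≤ 2 * ω t := by
    intro t ht ht0
    have hpA : (ω t, ω t / t) ∈ A := by
      intro s hs
      set n : ℕ := ⌊s / t⌋₊ with hn
      have hsn : s ≤ (n + 1) * t := by
        have h1 : s / t < n + 1 := Nat.lt_floor_add_one _
        calc s = (s / t) * t := by field_simp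
          _ ≤ (n + 1) * t := by nlinarith
      have h2 : ω s ≤ (n + 1) * ω t := hgrow t ht ht0 n s hs hsn
      have h3 : (n : ℝ) ≤ s / t := Nat.floor_le (div_nonneg hs.1 ht0.le)
      have hωt := hnonneg t ht
      calc ω s ≤ (n + 1) * ω t := h2
        _ ≤ (s / t + 1) * ω t := by nlinarith
        _ = ω t + ω t / t * s := by field_simp; ring
    have := hle t ht _ hpA
    calc ν t ≤ ω t + ω t / t * t := this
      _ = 2 * ω t := by field_simp; ring
  -- monotonicity of ν
  have hνmono : MonotoneOn ν (Icc (0:ℝ) 1) := by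
    intro x hx y hy hxy
    apply le_csInf (himne y)
    rintro _ ⟨p, hp, rfl⟩
    by_cases hslope : 0 ≤ p.2
    · calc ν x ≤ p.1 + p.2 * x := hle x hx p hp
        _ ≤ p.1 + p.2 * y := by nlinarith
    · push_neg at hslope
      have hq : ((p.1 + p.2, 0) : ℝ × ℝ) ∈ A := by
        intro s hs
        have h1 : ω s ≤ ω 1 := hmono hs (by norm_num) hs.2
        have h2 : ω 1 ≤ p.1 + p.2 * 1 := hp 1 (by norm_num)
        simp only
        linarith
      calc ν x ≤ (p.1 + p.2) + 0 * x := hle x hx _ hq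
        _ ≤ p.1 + p.2 * y := by nlinarith [hy.2]
  -- concavity of ν
  have hνconc : ConcaveOn ℝ (Icc (0:ℝ) 1) ν := by
    refine ⟨convex_Icc _ _, ?_⟩
    intro x hx y hy a b ha hb hab
    have hz : a • x + b • y ∈ Icc (0:ℝ) 1 := (convex_Icc (0:ℝ) 1) hx hy ha hb hab
    apply le_csInf (himne _)
    rintro _ ⟨p, hp, rfl⟩
    have h1 : ν x ≤ p.1 + p.2 * x := hle x hx p hp
    have h2 : ν y ≤ p.1 + p.2 * y := hle y hy p hp
    simp only [smul_eq_mul] at hz ⊢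
    have key : a * (p.1 + p.2 * x) + b * (p.1 + p.2 * y) = p.1 + p.2 * (a * x + b * y) := by
      linear_combination p.1 * hab
    nlinarith [mul_le_mul_of_nonneg_left h1 ha, mul_le_mul_of_nonneg_left h2 hb]
  have hν0 : ∀ t ∈ Icc (0:ℝ) 1, 0 ≤ ν t := fun t ht => le_trans (hnonneg t ht) (hων t ht)
  refine ⟨fun t => if t = 0 then 0 else ν t / 2, ?_, ?_, ?_⟩
  · refine ⟨convex_Icc _ _, ?_⟩
    intro x hx y hy a b ha hb hab
    have hz : a • x + b • y ∈ Icc (0:ℝ) 1 := (convex_Icc (0:ℝ) 1) hx hy ha hb hab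
    have hcc := hνconc.2 hx hy ha hb hab
    simp only [smul_eq_mul] at hz hcc ⊢
    have hμle : ∀ t ∈ Icc (0:ℝ) 1, (if t = 0 then (0:ℝ) else ν t / 2) ≤ ν t / 2 := by
      intro t ht
      split
      · linarith [hν0 t ht]
      · exact le_refl _
    by_cases hzz : a * x + b * y = 0
    · rw [if_pos hzz]
      have hax : a * (if x = 0 then (0:ℝ) else ν x / 2) = 0 := by
        rcases mul_eq_zero.1 (by nlinarith [hx.1, hy.1] : a * x = 0) with h | h
        · simp [h]
        · simp [if_pos h]
      have hby : b * (if y = 0 then (0:ℝ) else ν y / 2) = 0 := by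
        rcases mul_eq_zero.1 (by nlinarith [hx.1, hy.1] : b * y = 0) with h | h
        · simp [h]
        · simp [if_pos h]
      rw [hax, hby]
      norm_num
    · rw [if_neg hzz]
      have h1 := hμle x hx
      have h2 := hμle y hy
      nlinarith [mul_le_mul_of_nonneg_left h1 ha, mul_le_mul_of_nonneg_left h2 hb]
  · intro x hx y hy hxy
    simp only
    by_cases h : x = 0
    · rw [if_pos h]
      split
      · exact le_refl _
      · linarith [hν0 y hy]
    · have hy0 : y ≠ 0 := by intro hh; exact h (le_antisymm (hh ▸ hxy) hx.1)
      rw [if_neg h, if_neg hy0]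
      linarith [hνmono hx hy hxy]
  · intro τ hτ
    simp only
    by_cases h : τ = 0
    · rw [if_pos h, h, h0]
      norm_num
    · have hτ0 : 0 < τ := lt_of_le_of_ne hτ.1 (Ne.symm h)
      rw [if_neg h]
      constructor
      · linarith [hν2ω τ hτ hτ0]
      · linarith [hων τ hτ]
end

section
/- With the choices a_n as above, r_n := a_{n+1} − a_n = 1/((n+1+k₀)²μ(1/(n+1+k₀))) and z_n = (n+k₀)³, the quantity p_n := (z_{n+1} − z_n) r_n satisfies p_n > 1 for all n ≥ 1 when k₀ is large enough, and sup_n p_n r_n^{−1} z_n^{−1} / μ(r_n) < +∞. -/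
/-!
Concavity and `μ 0 = 0` give the linear lower bound `μ 1 * s ≤ μ s` on `[0, 1]`, and more
precisely `μ a * min 1 (r / a) ≤ μ r`. With `N = n + 1 + k₀ ≥ 1 / μ 1` this yields
`μ (1 / N) ≥ μ 1 / N`, hence `r_n ≤ 1`, and then `μ r_n ≥ μ 1 / N`. Since `μ (1 / N) ≤ 1`,
`p_n ≥ (3N² - 3N + 1) / N² > 1`, while `p_n / (r_n z_n μ r_n) ≤ (3N² - 3N + 1) N / ((N - 1)³ μ 1)`
stays bounded.
-/

open Set

theorem ConcaveOn.smul_le_apply_smul {𝕜 E β : Type*} [Ring 𝕜] [PartialOrder 𝕜] [IsOrderedRing 𝕜]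
    [AddCommGroup E] [AddCommGroup β] [PartialOrder β] [IsOrderedAddMonoid β] [Module 𝕜 E]
    [Module 𝕜 β] {s : Set E} {f : E → β} (hf : ConcaveOn 𝕜 s f) (h0s : 0 ∈ s) (hf0 : f 0 = 0)
    {x : E} (hx : x ∈ s) {t : 𝕜} (ht₀ : 0 ≤ t) (ht₁ : t ≤ 1) : t • f x ≤ f (t • x) := by
  simpa [hf0] using hf.2 h0s hx (sub_nonneg.2 ht₁) ht₀ (sub_add_cancel 1 t)

theorem StrictMonoOn.pos_of_map_zero {f : ℝ → ℝ} {b s : ℝ} (hf : StrictMonoOn f (Icc 0 b))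
    (hf0 : f 0 = 0) (hs : s ∈ Ioc 0 b) : 0 < f s :=
  hf0 ▸ hf (left_mem_Icc.2 (hs.1.le.trans hs.2)) (Ioc_subset_Icc_self hs) hs.1

theorem ConcaveOn.mul_min_le_apply {s : Set ℝ} {f : ℝ → ℝ} (hf : ConcaveOn ℝ s f)
    (hmono : MonotoneOn f s) (h0s : 0 ∈ s) (hf0 : f 0 = 0) {a r : ℝ} (ha : a ∈ s) (ha₀ : 0 < a)
    (hr : r ∈ s) (hr₀ : 0 ≤ r) : f a * min 1 (r / a) ≤ f r := by
  rcases le_total a r with har | hra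
  · calc f a * min 1 (r / a) ≤ f a * 1 := by
          gcongr
          · exact hf0 ▸ hmono h0s ha ha₀.le
          · exact min_le_left _ _
      _ ≤ f r := by simpa using hmono ha hr har
  · have hfa : 0 ≤ f a := hf0 ▸ hmono h0s ha ha₀.le
    calc f a * min 1 (r / a) ≤ r / a * f a := by
          rw [mul_comm]; gcongr; exact min_le_right _ _
      _ ≤ f (r / a * a) :=
          hf.smul_le_apply_smul h0s hf0 ha (by positivity) ((div_le_one ha₀).2 hra)
      _ = f r := by rw [div_mul_cancel₀ r ha₀.ne']

theorem cube_sub_cube_pred_mul_le {m : ℝ} (hm : 1 ≤ m) :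
    ((m + 1) ^ 3 - m ^ 3) * (m + 1) ≤ 14 * m ^ 3 := by
  nlinarith [mul_nonneg (sq_nonneg m) (sub_nonneg.2 hm),
    mul_nonneg (by linarith : (0:ℝ) ≤ m) (sub_nonneg.2 hm)]

theorem one_lt_cube_sub_cube_pred_div {N u : ℝ} (hN : 1 < N) (hu₀ : 0 < u) (hu₁ : u ≤ 1) :
    1 < (N ^ 3 - (N - 1) ^ 3) * (1 / (N ^ 2 * u)) := by
  rw [mul_one_div, one_lt_div (by positivity)]
  nlinarith [mul_le_mul_of_nonneg_left hu₁ (sq_nonneg N)]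

/-- The increment `r_n = a_{n+1} - a_n`, as a function of `N = n + 1 + k₀`. -/
noncomputable def stepLength (μ : ℝ → ℝ) (N : ℝ) : ℝ := 1 / (N ^ 2 * μ (1 / N))

section

variable {μ : ℝ → ℝ} (hconc : ConcaveOn ℝ (Icc (0:ℝ) 1) μ) (hmono : StrictMonoOn μ (Icc (0:ℝ) 1))
  (h0 : μ 0 = 0) (hmap : ∀ τ ∈ Icc (0:ℝ) 1, μ τ ∈ Icc (0:ℝ) 1) {N : ℝ}

theorem one_div_mem_Ioc (hN : 1 ≤ N) : 1 / N ∈ Ioc (0:ℝ) 1 :=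
  ⟨by positivity, (div_le_one (by linarith)).2 hN⟩

include hconc h0 in
theorem div_le_apply_one_div (hN : 1 ≤ N) : μ 1 / N ≤ μ (1 / N) := by
  simpa [div_eq_inv_mul, mul_comm] using
    hconc.smul_le_apply_smul (left_mem_Icc.2 zero_le_one) h0 (right_mem_Icc.2 zero_le_one)
      (one_div_mem_Ioc hN).1.le (one_div_mem_Ioc hN).2

include hconc hmono h0 in
theorem stepLength_mem_Ioc (hN : 1 / μ 1 ≤ N) (hN₁ : 1 ≤ N) : stepLength μ N ∈ Ioc (0:ℝ) 1 := by
  have hc : 0 < μ 1 := hmono.pos_of_map_zero h0 (right_mem_Ioc.2 zero_lt_one)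
  have hu : 0 < μ (1 / N) := hmono.pos_of_map_zero h0 (one_div_mem_Ioc hN₁)
  have hcN : 1 ≤ μ 1 * N := by rwa [div_le_iff₀ hc, mul_comm] at hN
  have hcu := div_le_apply_one_div hconc h0 hN₁
  rw [div_le_iff₀ (by linarith)] at hcu
  exact ⟨by rw [stepLength]; positivity, (div_le_one (by positivity)).2 (by nlinarith)⟩

include hconc hmono h0 hmap in
/-- For `r = stepLength μ N` this is `μ r ≥ min (μ (1 / N)) (1 / N)`, by monotonicity when
`r ≥ 1 / N` and by concavity when `r ≤ 1 / N`. -/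
theorem div_le_apply_stepLength (hN : 1 / μ 1 ≤ N) (hN₁ : 1 ≤ N) :
    μ 1 / N ≤ μ (stepLength μ N) := by
  have hr := stepLength_mem_Ioc hconc hmono h0 hN hN₁
  have hu : 0 < μ (1 / N) := hmono.pos_of_map_zero h0 (one_div_mem_Ioc hN₁)
  have key := hconc.mul_min_le_apply hmono.monotoneOn (left_mem_Icc.2 zero_le_one) h0
    (Ioc_subset_Icc_self (one_div_mem_Ioc hN₁)) (one_div_mem_Ioc hN₁).1
    (Ioc_subset_Icc_self hr) hr.1.le
  have hmin : μ (1 / N) * (stepLength μ N / (1 / N)) = 1 / N := by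
    rw [stepLength]; field_simp
  rw [mul_min_of_nonneg _ _ hu.le, mul_one, hmin] at key
  refine le_trans (le_min (div_le_apply_one_div hconc h0 hN₁) ?_) key
  exact div_le_div_of_nonneg_right (hmap 1 (right_mem_Icc.2 zero_le_one)).2 (by linarith)

include hmono h0 hmap in
theorem one_lt_cube_sub_cube_pred_mul_stepLength (hN : 1 < N) :
    1 < (N ^ 3 - (N - 1) ^ 3) * stepLength μ N :=
  one_lt_cube_sub_cube_pred_div hN (hmono.pos_of_map_zero h0 (one_div_mem_Ioc hN.le))
    (hmap _ (Ioc_subset_Icc_self (one_div_mem_Ioc hN.le))).2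

include hconc hmono h0 hmap in
theorem cube_sub_cube_pred_mul_stepLength_div_le (hN : 1 / μ 1 ≤ N) (hN₂ : 2 ≤ N) :
    (N ^ 3 - (N - 1) ^ 3) * stepLength μ N * (stepLength μ N)⁻¹ * ((N - 1) ^ 3)⁻¹ /
      μ (stepLength μ N) ≤ 14 / μ 1 := by
  have hc : 0 < μ 1 := hmono.pos_of_map_zero h0 (right_mem_Ioc.2 zero_lt_one)
  have hN₀ : 0 < N := by linarith
  have hr := stepLength_mem_Ioc hconc hmono h0 hN (by linarith)
  have hμr := div_le_apply_stepLength hconc hmono h0 hmap hN (by linarith)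
  have hm : 0 < (N - 1) ^ 3 := pow_pos (by linarith) 3
  rw [mul_inv_cancel_right₀ hr.1.ne', ← div_eq_mul_inv, div_div,
    div_le_div_iff₀ (mul_pos hm (lt_of_lt_of_le (by positivity) hμr)) hc]
  rw [div_le_iff₀ hN₀] at hμr
  have hpoly := cube_sub_cube_pred_mul_le (m := N - 1) (by linarith)
  rw [sub_add_cancel] at hpoly
  nlinarith [mul_le_mul_of_nonneg_left hμr hm.le]

end

theorem stmt_18_general (μ : ℝ → ℝ) (hconc : ConcaveOn ℝ (Icc (0:ℝ) 1) μ)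
    (hmono : StrictMonoOn μ (Icc (0:ℝ) 1)) (h0 : μ 0 = 0)
    (hmap : ∀ τ ∈ Icc (0:ℝ) 1, μ τ ∈ Icc (0:ℝ) 1) :
    ∃ k₀ : ℕ, 1 ≤ k₀ ∧
      ∀ r z p : ℕ → ℝ,
        (∀ n : ℕ, r n = 1 / (((n : ℝ) + 1 + k₀) ^ 2 * μ (1 / ((n : ℝ) + 1 + k₀)))) →
        (∀ n : ℕ, z n = ((n : ℝ) + k₀) ^ 3) →
        (∀ n : ℕ, p n = (z (n + 1) - z n) * r n) →
        (∀ n : ℕ, 1 ≤ n → 1 < p n) ∧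
        ∃ C : ℝ, ∀ n : ℕ, 1 ≤ n → p n * (r n)⁻¹ * (z n)⁻¹ / μ (r n) ≤ C := by
  have hc : 0 < μ 1 := hmono.pos_of_map_zero h0 (right_mem_Ioc.2 zero_lt_one)
  set K := ⌈1 / μ 1⌉₊
  refine ⟨K, Nat.one_le_ceil_iff.2 (by positivity), fun r z p hr hz hp => ?_⟩
  have hK : 1 / μ 1 ≤ K := Nat.le_ceil _
  have hN : ∀ n : ℕ, 1 ≤ n → 1 / μ 1 ≤ (n : ℝ) + 1 + K ∧ 2 ≤ (n : ℝ) + 1 + K := fun n hn =>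
    ⟨by linarith [(Nat.cast_nonneg n : (0:ℝ) ≤ n)],
      by linarith [(Nat.one_le_cast (α := ℝ)).2 hn, (Nat.cast_nonneg K : (0:ℝ) ≤ K)]⟩
  have hpN : ∀ n : ℕ, p n = (((n : ℝ) + 1 + K) ^ 3 - ((n : ℝ) + 1 + K - 1) ^ 3) *
      stepLength μ ((n : ℝ) + 1 + K) := by
    intro n; rw [hp, hz, hz, hr, stepLength]; push_cast; ring_nf
  have hzN : ∀ n : ℕ, z n = ((n : ℝ) + 1 + K - 1) ^ 3 := by intro n; rw [hz]; ring
  refine ⟨fun n hn => ?_, 14 / μ 1, fun n hn => ?_⟩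
  · rw [hpN]
    exact one_lt_cube_sub_cube_pred_mul_stepLength hmono h0 hmap (by linarith [(hN n hn).2])
  · rw [hpN, hzN, hr, ← stepLength]
    exact cube_sub_cube_pred_mul_stepLength_div_le hconc hmono h0 hmap (hN n hn).1 (hN n hn).2

theorem stmt_18 (μ : ℝ → ℝ) (hconc : ConcaveOn ℝ (Icc (0:ℝ) 1) μ)
    (hmono : StrictMonoOn μ (Icc (0:ℝ) 1)) (h0 : μ 0 = 0)
    (hmap : ∀ τ ∈ Icc (0:ℝ) 1, μ τ ∈ Icc (0:ℝ) 1)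
    (hnotOsgood : MeasureTheory.IntegrableOn (fun s => 1 / μ s) (Ioc (0:ℝ) 1)) :
    ∃ k₀ : ℕ, 1 ≤ k₀ ∧
      ∀ r z p : ℕ → ℝ,
        (∀ n : ℕ, r n = 1 / (((n : ℝ) + 1 + k₀) ^ 2 * μ (1 / ((n : ℝ) + 1 + k₀)))) →
        (∀ n : ℕ, z n = ((n : ℝ) + k₀) ^ 3) →
        (∀ n : ℕ, p n = (z (n + 1) - z n) * r n) →
        (∀ n : ℕ, 1 ≤ n → 1 < p n) ∧
        ∃ C : ℝ, ∀ n : ℕ, 1 ≤ n → p n * (r n)⁻¹ * (z n)⁻¹ / μ (r n) ≤ C :=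
  stmt_18_general μ hconc hmono h0 hmap
end
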